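/- arXiv:1304.3042 — 2 statements merged into one kernel-verified Lean document; each statement's English description precedes it below -/
import Mathlib

section
/- Assume [0,1] ⊆ I ⊆ ℝ₊ or I = ℝ. A function f : Iⁿ → ℝ is a signed Choquet integral if and only if: (i) f is comonotonically additive or horizontally min-additive (and, when I = ℝ, horizontal max-additivity may also be used in place of these), and (ii) f(c·x·1_S) = c·f(x·1_S) for all x ∈ I and all c > 0 such that c·x ∈ I, and all S ⊆ X. -/
/-- `S↑_σ(i)` (0-indexed): the set `{σ(i), σ(i+1), …, σ(n-1)}`.  For `i = n` it is empty. -/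
def SUp {n : ℕ} (σ : Equiv.Perm (Fin n)) (i : ℕ) : Finset (Fin n) :=
  (Finset.univ.filter (fun j : Fin n => i ≤ (j : ℕ))).image σ

/-- `S↓_σ(i)`: the set `{σ(0), …, σ(i-1)}`.  For `i = 0` it is empty. -/
def SDown {n : ℕ} (σ : Equiv.Perm (Fin n)) (i : ℕ) : Finset (Fin n) :=
  (Finset.univ.filter (fun j : Fin n => (j : ℕ) < i)).image σ

/-- Two tuples are comonotonic if some permutation sorts both nondecreasingly. -/
def Comonotone {n : ℕ} (x y : Fin n → ℝ) : Prop :=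
  ∃ σ : Equiv.Perm (Fin n), Monotone (x ∘ σ) ∧ Monotone (y ∘ σ)

/-- The tuple `r·1_S`. -/
def indTuple {n : ℕ} (S : Finset (Fin n)) (r : ℝ) : Fin n → ℝ :=
  fun j => if j ∈ S then r else 0

/-- The signed Choquet integral of `x` w.r.t. `v`, computed via a sorting permutation. -/
noncomputable def Cv {n : ℕ} (v : Finset (Fin n) → ℝ) (x : Fin n → ℝ) : ℝ :=
  ∑ i : Fin n,
    x (Tuple.sort x i) *
      (v (SUp (Tuple.sort x) (i : ℕ)) - v (SUp (Tuple.sort x) ((i : ℕ) + 1)))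

/-- `f` is the restriction to `Iⁿ` of a signed Choquet integral. -/
def IsSignedChoquetOn {n : ℕ} (I : Set ℝ) (f : (Fin n → ℝ) → ℝ) : Prop :=
  ∃ v : Finset (Fin n) → ℝ, v ∅ = 0 ∧
    ∀ σ : Equiv.Perm (Fin n), ∀ x : Fin n → ℝ, (∀ i, x i ∈ I) → Monotone (x ∘ σ) →
      f x = ∑ i : Fin n, x (σ i) * (v (SUp σ (i : ℕ)) - v (SUp σ ((i : ℕ) + 1)))

/-- `f` is the restriction to `Iⁿ` of a symmetric signed Choquet integral
`Č_v(x) = C_v(x⁺) - C_v(x⁻)`. -/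
def IsSymSignedChoquetOn {n : ℕ} (I : Set ℝ) (f : (Fin n → ℝ) → ℝ) : Prop :=
  ∃ v : Finset (Fin n) → ℝ, v ∅ = 0 ∧
    ∀ x : Fin n → ℝ, (∀ i, x i ∈ I) →
      f x = Cv v (fun i => max (x i) 0) - Cv v (fun i => max (-x i) 0)

/-- Comonotonic modularity (on tuples with entries in `D`). -/
def ComonModularOn {n : ℕ} (D : Set ℝ) (f : (Fin n → ℝ) → ℝ) : Prop :=
  ∀ x y : Fin n → ℝ, (∀ i, x i ∈ D) → (∀ i, y i ∈ D) → Comonotone x y →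
    f x + f y = f (fun i => min (x i) (y i)) + f (fun i => max (x i) (y i))

/-- Comonotonic additivity (on tuples with entries in `D`). -/
def ComonAdditiveOn {n : ℕ} (D : Set ℝ) (f : (Fin n → ℝ) → ℝ) : Prop :=
  ∀ x y : Fin n → ℝ, (∀ i, x i ∈ D) → (∀ i, y i ∈ D) → Comonotone x y →
    (∀ i, x i + y i ∈ D) → f (fun i => x i + y i) = f x + f y

/-- Comonotonic maxitivity. -/
def ComonMaxitiveOn {n : ℕ} (D : Set ℝ) (f : (Fin n → ℝ) → ℝ) : Prop :=
  ∀ x y : Fin n → ℝ, (∀ i, x i ∈ D) → (∀ i, y i ∈ D) → Comonotone x y →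
    f (fun i => max (x i) (y i)) = max (f x) (f y)

/-- Comonotonic minitivity. -/
def ComonMinitiveOn {n : ℕ} (D : Set ℝ) (f : (Fin n → ℝ) → ℝ) : Prop :=
  ∀ x y : Fin n → ℝ, (∀ i, x i ∈ D) → (∀ i, y i ∈ D) → Comonotone x y →
    f (fun i => min (x i) (y i)) = min (f x) (f y)

/-- Horizontal min-additivity. -/
def HorizMinAdditiveOn {n : ℕ} (D : Set ℝ) (f : (Fin n → ℝ) → ℝ) : Prop :=
  ∀ x : Fin n → ℝ, (∀ i, x i ∈ D) → ∀ c ∈ D, (∀ i, x i - min (x i) c ∈ D) →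
    f x = f (fun i => min (x i) c) + f (fun i => x i - min (x i) c)

/-- Horizontal max-additivity. -/
def HorizMaxAdditiveOn {n : ℕ} (D : Set ℝ) (f : (Fin n → ℝ) → ℝ) : Prop :=
  ∀ x : Fin n → ℝ, (∀ i, x i ∈ D) → ∀ c ∈ D, (∀ i, x i - max (x i) c ∈ D) →
    f x = f (fun i => max (x i) c) + f (fun i => x i - max (x i) c)

/-- Horizontal median-additivity (for `I` centered at `0`). -/
def HorizMedAdditiveOn {n : ℕ} (I : Set ℝ) (f : (Fin n → ℝ) → ℝ) : Prop :=
  ∀ x : Fin n → ℝ, (∀ i, x i ∈ I) → ∀ c ∈ I, 0 ≤ c →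
    f x = f (fun i => max (-c) (min (x i) c)) + f (fun i => x i - min (x i) c)
        + f (fun i => x i - max (x i) (-c))

/-- Invariance under horizontal min-differences (for domains of nonnegative tuples). -/
def InvHMinDiffOn {n : ℕ} (D : Set ℝ) (f : (Fin n → ℝ) → ℝ) : Prop :=
  ∀ x : Fin n → ℝ, (∀ i, x i ∈ D) → ∀ c ∈ D,
    f x - f (fun i => min (x i) c) =
      f (fun i => if x i ≤ c then 0 else x i) -
        f (fun i => min (if x i ≤ c then 0 else x i) c)

/-- Invariance under horizontal max-differences (for domains of nonpositive tuples). -/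
def InvHMaxDiffOn {n : ℕ} (D : Set ℝ) (f : (Fin n → ℝ) → ℝ) : Prop :=
  ∀ x : Fin n → ℝ, (∀ i, x i ∈ D) → ∀ c ∈ D,
    f x - f (fun i => max (x i) c) =
      f (fun i => if c ≤ x i then 0 else x i) -
        f (fun i => max (if c ≤ x i then 0 else x i) c)

/-- `⋀_{i ∈ S} x i`, with the convention that the empty infimum is `b`. -/
noncomputable def infWith {n : ℕ} (b : ℝ) (S : Finset (Fin n)) (x : Fin n → ℝ) : ℝ :=
  if h : S.Nonempty then S.inf' h x else b

/-- An `[a,b]`-valued capacity. -/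
def IsCapacityOn {n : ℕ} (a b : ℝ) (μ : Finset (Fin n) → ℝ) : Prop :=
  μ ∅ = a ∧ μ Finset.univ = b ∧ ∀ S T : Finset (Fin n), S ⊆ T → μ S ≤ μ T

/-- `f` is nondecreasing (in each argument) on tuples with entries in `D`. -/
def NondecreasingOn {n : ℕ} (D : Set ℝ) (f : (Fin n → ℝ) → ℝ) : Prop :=
  ∀ x y : Fin n → ℝ, (∀ i, x i ∈ D) → (∀ i, y i ∈ D) → (∀ i, x i ≤ y i) → f x ≤ f y

/-!
Comonotonic additivity implies horizontal min-additivity, because `x ∧ c` and `x - x ∧ c` are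
comonotonic with sum `x`. For `I = ℝ`, the reflection `f ↦ (x ↦ -f (-x))` exchanges horizontal
max- and min-additivity and maps signed Choquet integrals to signed Choquet integrals (for the dual
capacity `S ↦ v X - v Sᶜ`). So only a horizontally min-additive `f` has to be treated; put
`v S = f 1_S`. Cutting a nonnegative `x`, sorted by `σ`, successively at the levels
`0 ≤ x_{σ(1)} ≤ ⋯ ≤ x_{σ(n)}` splits off the layers `(x_{σ(k)} - x_{σ(k-1)}) 1_{S↑_σ(k)}`, on which
`f` agrees with `C_v` by homogeneity, and `C_v` is additive along a fixed `σ`. A tuple with negative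
entries (when `I = ℝ`) is first cut at a constant below its minimum.
-/

open scoped Pointwise

variable {n : ℕ}

section SUp

lemma mem_SUp {σ : Equiv.Perm (Fin n)} {k : ℕ} {j : Fin n} :
    j ∈ SUp σ k ↔ k ≤ (σ.symm j : ℕ) := by
  simp only [SUp, Finset.mem_image, Finset.mem_filter, Finset.mem_univ, true_and]
  exact ⟨by rintro ⟨p, hp, rfl⟩; simpa using hp, fun h => ⟨σ.symm j, h, σ.apply_symm_apply j⟩⟩

lemma SUp_zero (σ : Equiv.Perm (Fin n)) : SUp σ 0 = Finset.univ := by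
  ext j; simp [mem_SUp]

lemma SUp_eq_empty (σ : Equiv.Perm (Fin n)) {k : ℕ} (hk : n ≤ k) : SUp σ k = ∅ := by
  ext j
  simp only [mem_SUp, Finset.notMem_empty, iff_false, not_le]
  exact (σ.symm j).isLt.trans_le hk

lemma SUp_revPerm_trans (σ : Equiv.Perm (Fin n)) {k : ℕ} (hk : k ≤ n) :
    SUp (Fin.revPerm.trans σ) k = (SUp σ (n - k))ᶜ := by
  ext j
  simp only [mem_SUp, Finset.mem_compl, Equiv.symm_trans_apply, Fin.revPerm_symm,
    Fin.revPerm_apply, Fin.val_rev]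
  have := (σ.symm j).isLt
  omega

end SUp

section indTuple

lemma indTuple_empty (r : ℝ) : indTuple (∅ : Finset (Fin n)) r = 0 := by
  funext j; simp [indTuple]

lemma indTuple_zero (S : Finset (Fin n)) : indTuple S 0 = 0 := by
  funext j; simp [indTuple]

lemma indTuple_univ (r : ℝ) : indTuple (Finset.univ : Finset (Fin n)) r = fun _ => r := by
  funext j; simp [indTuple]

lemma indTuple_mul (S : Finset (Fin n)) (c r : ℝ) : indTuple S (c * r) = c • indTuple S r := by
  funext j; simp [indTuple]

lemma neg_indTuple (S : Finset (Fin n)) (r : ℝ) : -indTuple S r = indTuple S (-r) := by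
  funext j; by_cases hj : j ∈ S <;> simp [indTuple, hj]

lemma indTuple_mem {I : Set ℝ} (h0 : (0 : ℝ) ∈ I) (S : Finset (Fin n)) {r : ℝ} (hr : r ∈ I)
    (j : Fin n) : indTuple S r j ∈ I := by
  unfold indTuple; split_ifs <;> assumption

end indTuple

def choquetSum (v : Finset (Fin n) → ℝ) (σ : Equiv.Perm (Fin n)) (x : Fin n → ℝ) : ℝ :=
  ∑ i : Fin n, x (σ i) * (v (SUp σ i) - v (SUp σ (i + 1)))

section choquetSum

variable (v : Finset (Fin n) → ℝ) (σ : Equiv.Perm (Fin n))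

lemma choquetSum_add (x y : Fin n → ℝ) :
    choquetSum v σ (x + y) = choquetSum v σ x + choquetSum v σ y := by
  simp only [choquetSum, Pi.add_apply, add_mul, Finset.sum_add_distrib]

lemma choquetSum_smul (c : ℝ) (x : Fin n → ℝ) :
    choquetSum v σ (c • x) = c * choquetSum v σ x := by
  simp only [choquetSum, Pi.smul_apply, smul_eq_mul, mul_assoc, Finset.mul_sum]

lemma choquetSum_indTuple_SUp (hv : v ∅ = 0) (k : ℕ) (r : ℝ) :
    choquetSum v σ (indTuple (SUp σ k) r) = r * v (SUp σ k) := by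
  set g : ℕ → ℝ := fun i => v (SUp σ i)
  -- Below level `k` the summand vanishes and `max · k` freezes, so the sum telescopes.
  have hterm : ∀ i : ℕ, (if k ≤ i then r else 0) * (g i - g (i + 1)) =
      r * (g (max i k) - g (max (i + 1) k)) := by
    intro i
    by_cases hik : k ≤ i
    · rw [if_pos hik, max_eq_left hik, max_eq_left (hik.trans i.le_succ)]
    · rw [if_neg hik, max_eq_right (by omega), max_eq_right (by omega)]
      ring
  calc choquetSum v σ (indTuple (SUp σ k) r)
      = ∑ i ∈ Finset.range n, r * (g (max i k) - g (max (i + 1) k)) := by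
        rw [← Fin.sum_univ_eq_sum_range (fun i => r * (g (max i k) - g (max (i + 1) k)))]
        refine Finset.sum_congr rfl fun i _ => ?_
        simp only [indTuple, mem_SUp, Equiv.symm_apply_apply, ← hterm]
        rfl
    _ = r * (g k - g (max n k)) := by
        rw [← Finset.mul_sum, Finset.sum_range_sub' (fun i => g (max i k)), Nat.zero_max]
    _ = r * g k := by
        simp only [g, SUp_eq_empty σ (le_max_left n k), hv, sub_zero]

lemma choquetSum_indTuple_univ (hv : v ∅ = 0) (r : ℝ) :
    choquetSum v σ (fun _ => r) = r * v Finset.univ := by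
  rw [← indTuple_univ, ← SUp_zero σ, choquetSum_indTuple_SUp v σ hv]

end choquetSum

def IndHomogeneousOn (I : Set ℝ) (f : (Fin n → ℝ) → ℝ) : Prop :=
  ∀ x ∈ I, ∀ c : ℝ, 0 < c → c * x ∈ I → ∀ S : Finset (Fin n),
    f (indTuple S (c * x)) = c * f (indTuple S x)

variable {I : Set ℝ} {f : (Fin n → ℝ) → ℝ}

section Necessity

lemma IsSignedChoquetOn.comonAdditiveOn (h : IsSignedChoquetOn I f) : ComonAdditiveOn I f := by
  obtain ⟨v, -, hf⟩ := h
  rintro x y hx hy ⟨σ, hxσ, hyσ⟩ hxy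
  rw [hf σ x hx hxσ, hf σ y hy hyσ, hf σ _ hxy (hxσ.add hyσ)]
  exact choquetSum_add v σ x y

lemma IsSignedChoquetOn.indHomogeneousOn (h0 : (0 : ℝ) ∈ I) (h : IsSignedChoquetOn I f) :
    IndHomogeneousOn I f := by
  obtain ⟨v, -, hf⟩ := h
  intro x hx c hc hcx S
  set σ := Tuple.sort (indTuple S x)
  have hσ : Monotone (indTuple S x ∘ σ) := Tuple.monotone_sort _
  have hcσ : Monotone (indTuple S (c * x) ∘ σ) := by
    rw [indTuple_mul]; exact hσ.const_mul hc.le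
  rw [hf σ _ (indTuple_mem h0 S hcx) hcσ, hf σ _ (indTuple_mem h0 S hx) hσ]
  exact (congrArg (choquetSum v σ) (indTuple_mul S c x)).trans (choquetSum_smul v σ c _)

end Necessity

lemma ComonAdditiveOn.horizMinAdditiveOn (h : ComonAdditiveOn I f) : HorizMinAdditiveOn I f := by
  intro x hx c hc hxc
  have hlow : ∀ i, min (x i) c ∈ I := fun i => by
    rcases min_choice (x i) c with h | h <;> rw [h]
    exacts [hx i, hc]
  have hσ := Tuple.monotone_sort x
  have hcom : Comonotone (fun i => min (x i) c) (fun i => x i - min (x i) c) := by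
    refine ⟨Tuple.sort x, fun a b hab => min_le_min_right c (hσ hab), fun a b hab => ?_⟩
    have := hσ hab
    simp only [Function.comp_apply, min_def] at this ⊢
    split_ifs <;> linarith
  have hsum : (fun i => min (x i) c + (x i - min (x i) c)) = x := funext fun i => by ring
  have := h _ _ hlow hxc hcom fun i => by rw [add_sub_cancel]; exact hx i
  rwa [hsum] at this

section Reflection

lemma HorizMaxAdditiveOn.neg (h : HorizMaxAdditiveOn I f) :
    HorizMinAdditiveOn (-I) (fun y => -f (-y)) := by
  intro x hx c hc hxc
  have hhigh : ∀ i, -(x i - min (x i) c) = (-x) i - max ((-x) i) (-c) := fun i => by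
    rw [Pi.neg_apply, max_neg_neg]; ring
  have hlow : (fun i => -min (x i) c) = fun i => max ((-x) i) (-c) :=
    funext fun i => (max_neg_neg (x i) c).symm
  have := h (-x) hx (-c) hc fun i => by rw [← hhigh]; exact hxc i
  show -f (-x) = -f (fun i => -min (x i) c) + -f (fun i => -(x i - min (x i) c))
  rw [hlow, funext hhigh, this]
  ring

lemma IndHomogeneousOn.neg (h : IndHomogeneousOn I f) :
    IndHomogeneousOn (-I) (fun y => -f (-y)) := by
  intro x hx c hc hcx S
  have hcx' : c * -x ∈ I := by rw [mul_neg]; exact hcx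
  simp only [neg_indTuple, ← mul_neg, h (-x) hx c hc hcx' S]

lemma IsSignedChoquetOn.neg {g : (Fin n → ℝ) → ℝ} (h : IsSignedChoquetOn I g) :
    IsSignedChoquetOn (-I) (fun x => -g (-x)) := by
  obtain ⟨v, -, hg⟩ := h
  refine ⟨fun S => v Finset.univ - v Sᶜ, by simp, fun σ x hx hσ => ?_⟩
  have hτ : Monotone (-x ∘ Fin.revPerm.trans σ) := fun a b hab =>
    neg_le_neg (hσ (Fin.rev_le_rev.mpr hab))
  show -g (-x) = _
  rw [hg _ (-x) hx hτ, ← Finset.sum_neg_distrib]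
  refine Fintype.sum_equiv Fin.revPerm _ _ fun i => ?_
  have hi := i.isLt
  rw [SUp_revPerm_trans σ hi.le, SUp_revPerm_trans σ hi]
  simp only [Equiv.trans_apply, Fin.revPerm_apply, Pi.neg_apply, Fin.val_rev]
  rw [show n - ((i : ℕ) + 1) + 1 = n - i by omega]
  ring

end Reflection

section Sufficiency

lemma IndHomogeneousOn.map_zero (h0 : (0 : ℝ) ∈ I) (h : IndHomogeneousOn I f) : f 0 = 0 := by
  have h2 := h 0 h0 2 two_pos (by rwa [mul_zero]) ∅
  rw [indTuple_empty, indTuple_empty] at h2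
  linarith

lemma IndHomogeneousOn.map_indTuple (h0 : (0 : ℝ) ∈ I) (h1 : (1 : ℝ) ∈ I)
    (h : IndHomogeneousOn I f) (S : Finset (Fin n)) {r : ℝ} (hr : r ∈ I) (hr0 : 0 ≤ r) :
    f (indTuple S r) = r * f (indTuple S 1) := by
  rcases hr0.eq_or_lt with rfl | hr0
  · rw [indTuple_zero, h.map_zero h0, zero_mul]
  · simpa using h 1 h1 r hr0 (by rwa [mul_one]) S

/-- The levels `0, x (σ 0), …, x (σ (n-1))` at which a tuple sorted by `σ` is cut; the values
past index `n` are junk. -/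
def level (σ : Equiv.Perm (Fin n)) (x : Fin n → ℝ) : ℕ → ℝ
  | 0 => 0
  | k + 1 => if h : k < n then x (σ ⟨k, h⟩) else 0

section level

variable {x : Fin n → ℝ}

lemma le_level {σ : Equiv.Perm (Fin n)} (hσ : Monotone (x ∘ σ)) {j : Fin n} {k : ℕ}
    (hjk : (σ.symm j : ℕ) < k) (hk : k ≤ n) : x j ≤ level σ x k := by
  obtain ⟨k, rfl⟩ := Nat.exists_eq_add_one_of_ne_zero (Nat.ne_zero_of_lt hjk)
  rw [level, dif_pos (by omega)]
  simpa using hσ (show σ.symm j ≤ ⟨k, by omega⟩ from Fin.le_def.mpr (by simp; omega))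

lemma level_succ_le {σ : Equiv.Perm (Fin n)} (hσ : Monotone (x ∘ σ)) {j : Fin n} {k : ℕ}
    (hkj : k ≤ (σ.symm j : ℕ)) : level σ x (k + 1) ≤ x j := by
  have hk : k < n := hkj.trans_lt (σ.symm j).isLt
  rw [level, dif_pos hk]
  simpa using hσ (show (⟨k, hk⟩ : Fin n) ≤ σ.symm j from Fin.le_def.mpr hkj)

lemma level_le_level_succ {σ : Equiv.Perm (Fin n)} (hσ : Monotone (x ∘ σ)) (hx0 : ∀ j, 0 ≤ x j)
    {k : ℕ} (hk : k < n) : level σ x k ≤ level σ x (k + 1) := by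
  rcases k with _ | k
  · rw [level, level, dif_pos hk]; exact hx0 _
  · rw [level, level, dif_pos hk, dif_pos (by omega)]
    exact hσ (Fin.le_def.mpr (Nat.le_succ k))

lemma level_nonneg (σ : Equiv.Perm (Fin n)) (hx0 : ∀ j, 0 ≤ x j) (k : ℕ) : 0 ≤ level σ x k := by
  rcases k with _ | k
  · exact le_rfl
  · rw [level]; split_ifs
    · exact hx0 _
    · exact le_rfl

lemma level_mem (σ : Equiv.Perm (Fin n)) (h0 : (0 : ℝ) ∈ I) (hx : ∀ j, x j ∈ I) (k : ℕ) :
    level σ x k ∈ I := by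
  rcases k with _ | k
  · exact h0
  · rw [level]; split_ifs
    · exact hx _
    · exact h0

end level

lemma min_sub_min_eq_indTuple {x : Fin n → ℝ} {a b : ℝ} (hab : a ≤ b) {S : Finset (Fin n)}
    (hS : ∀ j ∈ S, b ≤ x j) (hSc : ∀ j ∉ S, x j ≤ a) (j : Fin n) :
    min (x j - min (x j) a) (b - a) = indTuple S (b - a) j ∧
      min (x j) b = min (x j) a + indTuple S (b - a) j := by
  unfold indTuple
  by_cases hj : j ∈ S
  · have := hS j hj
    rw [if_pos hj, min_eq_right (hab.trans this), min_eq_right this]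
    exact ⟨min_eq_right (by linarith), by ring⟩
  · have := hSc j hj
    rw [if_neg hj, min_eq_left this, min_eq_left (this.trans hab), sub_self]
    exact ⟨min_eq_left (by linarith), by ring⟩

lemma HorizMinAdditiveOn.map_sub_min_eq (hI : I.OrdConnected) (h0 : (0 : ℝ) ∈ I)
    (hf : HorizMinAdditiveOn I f) {x : Fin n → ℝ} (hx : ∀ j, x j ∈ I) (hx0 : ∀ j, 0 ≤ x j)
    {a b : ℝ} (ha : 0 ≤ a) (hab : a ≤ b) (hb : b ∈ I) {S : Finset (Fin n)}
    (hS : ∀ j ∈ S, b ≤ x j) (hSc : ∀ j ∉ S, x j ≤ a) :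
    f (fun j => x j - min (x j) a) = f (indTuple S (b - a)) + f (fun j => x j - min (x j) b) := by
  have hcut : ∀ c, 0 ≤ c → ∀ j, x j - min (x j) c ∈ I := fun c hc j =>
    hI.out h0 (hx j) ⟨by linarith [min_le_left (x j) c], by linarith [le_min (hx0 j) hc]⟩
  have hlayer := min_sub_min_eq_indTuple hab hS hSc
  have := hf _ (hcut a ha) (b - a) (hI.out h0 hb ⟨by linarith, by linarith⟩) fun j => by
    rw [(hlayer j).1]
    convert hcut b (ha.trans hab) j using 1
    linarith [(hlayer j).2]
  rw [this]
  congr 2 <;> funext j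
  · exact (hlayer j).1
  · linarith [(hlayer j).1, (hlayer j).2]

lemma HorizMinAdditiveOn.eq_choquetSum_of_nonneg (hI : I.OrdConnected) (h0 : (0 : ℝ) ∈ I)
    (h1 : (1 : ℝ) ∈ I) (hf : HorizMinAdditiveOn I f) (hom : IndHomogeneousOn I f)
    {σ : Equiv.Perm (Fin n)} {x : Fin n → ℝ} (hx : ∀ j, x j ∈ I) (hx0 : ∀ j, 0 ≤ x j)
    (hσ : Monotone (x ∘ σ)) :
    f x = choquetSum (fun S => f (indTuple S 1)) σ x := by
  set v : Finset (Fin n) → ℝ := fun S => f (indTuple S 1)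
  have hv : v ∅ = 0 := by simp only [v, indTuple_empty, hom.map_zero h0]
  have hcut : ∀ k ≤ n, f x = choquetSum v σ (fun j => min (x j) (level σ x k)) +
      f (fun j => x j - min (x j) (level σ x k)) := by
    intro k hk
    induction k with
    | zero =>
      have hmin0 : ∀ j, min (x j) 0 = 0 := fun j => min_eq_right (hx0 j)
      simp [level, hmin0, choquetSum]
    | succ k ih =>
      have hkn : k < n := hk
      have hmono := level_le_level_succ hσ hx0 hkn
      have hS : ∀ j ∈ SUp σ k, level σ x (k + 1) ≤ x j := fun j hj =>
        level_succ_le hσ (mem_SUp.mp hj)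
      have hSc : ∀ j ∉ SUp σ k, x j ≤ level σ x k := fun j hj =>
        le_level hσ (not_le.mp (mt mem_SUp.mpr hj)) hkn.le
      have hd : level σ x (k + 1) - level σ x k ∈ I :=
        hI.out h0 (level_mem σ h0 hx _) ⟨by linarith, by linarith [level_nonneg σ hx0 k]⟩
      have hsplit : (fun j => min (x j) (level σ x (k + 1))) = (fun j => min (x j) (level σ x k))
          + indTuple (SUp σ k) (level σ x (k + 1) - level σ x k) :=
        funext fun j => (min_sub_min_eq_indTuple hmono hS hSc j).2
      rw [ih hkn.le, hf.map_sub_min_eq hI h0 hx hx0 (level_nonneg σ hx0 k) hmono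
        (level_mem σ h0 hx _) hS hSc, hsplit, choquetSum_add, choquetSum_indTuple_SUp v σ hv,
        hom.map_indTuple h0 h1 _ hd (by linarith)]
      ring
  have htop : ∀ j, min (x j) (level σ x n) = x j := fun j =>
    min_eq_left (le_level hσ (σ.symm j).isLt le_rfl)
  have hcut_n := hcut n le_rfl
  rw [show (fun j => min (x j) (level σ x n)) = x from funext htop,
    show (fun j => x j - min (x j) (level σ x n)) = 0 from funext fun j => by simp [htop],
    hom.map_zero h0, add_zero] at hcut_n
  exact hcut_n

lemma HorizMinAdditiveOn.map_const_of_nonpos (hf : HorizMinAdditiveOn Set.univ f)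
    (hom : IndHomogeneousOn Set.univ f) {c : ℝ} (hc : c ≤ 0) :
    f (fun _ => c) = c * f (indTuple Finset.univ 1) := by
  have h := hf 0 (fun _ => trivial) c trivial fun _ => trivial
  simp only [Pi.zero_apply, min_eq_right hc, zero_sub] at h
  have hneg : f (fun _ => -c) = -c * f (indTuple Finset.univ 1) := by
    rw [← indTuple_univ]
    exact hom.map_indTuple (Set.mem_univ _) (Set.mem_univ _) _ (Set.mem_univ _)
      (neg_nonneg.mpr hc)
  rw [hneg, hom.map_zero (Set.mem_univ _)] at h
  linarith

theorem HorizMinAdditiveOn.isSignedChoquetOn (hI : I.OrdConnected) (h0 : (0 : ℝ) ∈ I)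
    (h1 : (1 : ℝ) ∈ I) (hpos : I ⊆ Set.Ici 0 ∨ I = Set.univ) (hf : HorizMinAdditiveOn I f)
    (hom : IndHomogeneousOn I f) : IsSignedChoquetOn I f := by
  set v : Finset (Fin n) → ℝ := fun S => f (indTuple S 1)
  have hv : v ∅ = 0 := by simp only [v, indTuple_empty, hom.map_zero h0]
  refine ⟨v, hv, fun σ x hx hσ => ?_⟩
  rcases hpos with hpos | rfl
  · exact hf.eq_choquetSum_of_nonneg hI h0 h1 hom hx (fun j => hpos (hx j)) hσ
  set c := -∑ j, |x j|
  have hc0 : c ≤ 0 := neg_nonpos.mpr (Finset.sum_nonneg fun j _ => abs_nonneg (x j))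
  have hcx : ∀ j, c ≤ x j := fun j =>
    (neg_le_neg (Finset.single_le_sum (fun j _ => abs_nonneg (x j)) (Finset.mem_univ j))).trans
      (neg_abs_le (x j))
  have hcut := hf x hx c trivial fun _ => trivial
  have hmin_c : ∀ j, min (x j) c = c := fun j => min_eq_right (hcx j)
  simp only [hmin_c] at hcut
  have hshift : Monotone ((fun j => x j - c) ∘ σ) := fun a b hab => sub_le_sub_right (hσ hab) c
  rw [hcut, hf.map_const_of_nonpos hom hc0, hf.eq_choquetSum_of_nonneg hI h0 h1 hom
    (fun _ => trivial) (fun j => sub_nonneg.mpr (hcx j)) hshift]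
  change _ = choquetSum v σ x
  rw [congrArg (choquetSum v σ) (show x = (fun _ => c) + fun j => x j - c by ext; simp),
    choquetSum_add, choquetSum_indTuple_univ v σ hv]

theorem HorizMaxAdditiveOn.isSignedChoquetOn_univ (hf : HorizMaxAdditiveOn Set.univ f)
    (hom : IndHomogeneousOn Set.univ f) : IsSignedChoquetOn Set.univ f := by
  have hg := hf.neg.isSignedChoquetOn (by rw [Set.neg_univ]; exact Set.ordConnected_univ)
    (by simp) (by simp) (Or.inr Set.neg_univ) hom.neg
  simpa using hg.neg

end Sufficiency

theorem statement1_general (n : ℕ) (I : Set ℝ) (hI : I.OrdConnected)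
    (hcase : (Set.Icc (0 : ℝ) 1 ⊆ I ∧ I ⊆ Set.Ici 0) ∨ I = Set.univ)
    (f : (Fin n → ℝ) → ℝ) :
    IsSignedChoquetOn I f ↔
      ((ComonAdditiveOn I f ∨ HorizMinAdditiveOn I f ∨
          (I = Set.univ ∧ HorizMaxAdditiveOn I f)) ∧
        ∀ x ∈ I, ∀ c : ℝ, 0 < c → c * x ∈ I → ∀ S : Finset (Fin n),
          f (indTuple S (c * x)) = c * f (indTuple S x)) := by
  have hunit : Set.Icc (0 : ℝ) 1 ⊆ I := by
    rcases hcase with ⟨hunit, -⟩ | rfl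
    exacts [hunit, Set.subset_univ _]
  have h0 : (0 : ℝ) ∈ I := hunit ⟨le_rfl, zero_le_one⟩
  have h1 : (1 : ℝ) ∈ I := hunit ⟨zero_le_one, le_rfl⟩
  have hpos : I ⊆ Set.Ici 0 ∨ I = Set.univ := hcase.imp_left And.right
  refine ⟨fun h => ⟨Or.inl h.comonAdditiveOn, h.indHomogeneousOn h0⟩, ?_⟩
  rintro ⟨hadd | hmin | ⟨rfl, hmax⟩, hom⟩
  · exact hadd.horizMinAdditiveOn.isSignedChoquetOn hI h0 h1 hpos hom
  · exact hmin.isSignedChoquetOn hI h0 h1 hpos hom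
  · exact hmax.isSignedChoquetOn_univ hom

theorem statement1 (n : ℕ) (hn : 0 < n) (I : Set ℝ) (hI : I.OrdConnected)
    (hcase : (Set.Icc (0 : ℝ) 1 ⊆ I ∧ I ⊆ Set.Ici 0) ∨ I = Set.univ)
    (f : (Fin n → ℝ) → ℝ) :
    IsSignedChoquetOn I f ↔
      ((ComonAdditiveOn I f ∨ HorizMinAdditiveOn I f ∨
          (I = Set.univ ∧ HorizMaxAdditiveOn I f)) ∧
        ∀ x ∈ I, ∀ c : ℝ, 0 < c → c * x ∈ I → ∀ S : Finset (Fin n),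
          f (indTuple S (c * x)) = c * f (indTuple S x)) :=
  statement1_general n I hI hcase f
end

section
/- If a function f : Iⁿ → ℝ is comonotonic maxitive, or comonotonic minitive, then f is nondecreasing in each argument. -/
/-!
For `x ≤ y`, climb from `x` to `y` through the tuples `z_c = x ∨ (y ∧ c)`, with `c` running
through the values of `y` in increasing order. If no value of `y` lies strictly between `c < c'`,
then `z_c` and `y ∧ c'` are comonotonic and `z_c ∨ (y ∧ c') = z_{c'}`, so maxitivity gives
`f z_c ≤ f z_{c'}`; the first step holds because every tuple is comonotonic with a constant one.
The minitive case is the maxitive one for `u ↦ -f (-u)` on `-I`.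
-/

open Pointwise

section

variable {n : ℕ} {I : Set ℝ}

theorem comonotone_iff_monovary {x y : Fin n → ℝ} : Comonotone x y ↔ Monovary x y := by
  constructor
  · rintro ⟨σ, hx, hy⟩ i j hij
    simpa using hx.monovary hy (i := σ.symm i) (j := σ.symm j) (by simpa using hij)
  · intro h
    -- Sorting by `x + y` sorts `x` and `y`: a strict descent of either forces one of the sum.
    refine ⟨Tuple.sort (x + y), fun a b hab => ?_, fun a b hab => ?_⟩ <;>
      have hsum := Tuple.monotone_sort (x + y) hab <;>
      simp only [Function.comp_apply, Pi.add_apply] at hsum ⊢ <;>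
      by_contra! hlt
    · linarith [h.symm hlt]
    · linarith [h hlt]

theorem Comonotone.neg {x y : Fin n → ℝ} (h : Comonotone x y) : Comonotone (-x) (-y) := by
  rw [comonotone_iff_monovary] at h ⊢
  exact fun i j hij => neg_le_neg (h (neg_lt_neg_iff.mp hij))

theorem monovary_max_min_min {x y : Fin n → ℝ} (hxy : x ≤ y) {c c' : ℝ}
    (hgap : ∀ i, y i ≤ c ∨ c' ≤ y i) :
    Monovary (fun i => max (x i) (min (y i) c)) (fun i => min (y i) c') := by
  intro i j hij
  have hyij : y i < y j := lt_of_not_ge fun h => hij.not_ge (min_le_min_right c' h)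
  have hyic : y i ≤ c := (hgap i).resolve_right fun h => hij.not_ge (by simp [h])
  calc max (x i) (min (y i) c) ≤ y i := max_le (hxy i) (min_le_left _ _)
    _ ≤ min (y j) c := le_min hyij.le hyic
    _ ≤ max (x j) (min (y j) c) := le_max_right _ _

theorem ComonMaxitiveOn.le_apply_max {f : (Fin n → ℝ) → ℝ} (hf : ComonMaxitiveOn I f)
    {u w : Fin n → ℝ} (hu : ∀ i, u i ∈ I) (hw : ∀ i, w i ∈ I) (huw : Monovary u w) :
    f u ≤ f (fun i => max (u i) (w i)) := by
  rw [hf u w hu hw (comonotone_iff_monovary.mpr huw)]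
  exact le_max_left _ _

theorem ComonMaxitiveOn.le_apply_max_min_sort {m : ℕ} {f : (Fin (m + 1) → ℝ) → ℝ}
    (hf : ComonMaxitiveOn I f) {x y : Fin (m + 1) → ℝ} (hx : ∀ i, x i ∈ I) (hy : ∀ i, y i ∈ I)
    (hxy : x ≤ y) (k : Fin (m + 1)) :
    f x ≤ f (fun i => max (x i) (min (y i) (y (Tuple.sort y k)))) := by
  set σ := Tuple.sort y
  have hσ : Monotone (y ∘ σ) := Tuple.monotone_sort y
  have hmin : ∀ c ∈ I, ∀ i, min (y i) c ∈ I := fun c hc i => min_rec' (· ∈ I) (hy i) hc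
  induction k using Fin.induction with
  | zero =>
    have hconst : ∀ i, min (y i) (y (σ 0)) = y (σ 0) :=
      fun i => min_eq_right (by simpa using hσ (Fin.zero_le (σ.symm i)))
    simp only [hconst]
    exact hf.le_apply_max hx (fun _ => hy _) (monovary_const_right x _)
  | succ k ih =>
    have hgap : ∀ i, y i ≤ y (σ k.castSucc) ∨ y (σ k.succ) ≤ y i := by
      intro i
      rcases le_or_gt (σ.symm i) k.castSucc with h | h
      · exact Or.inl (by simpa using hσ h)
      · exact Or.inr (by simpa using hσ (Fin.castSucc_lt_iff_succ_le.mp h))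
    have hσk : y (σ k.castSucc) ≤ y (σ k.succ) := hσ (Fin.castSucc_le_succ k)
    have hjoin : ∀ i, max (max (x i) (min (y i) (y (σ k.castSucc)))) (min (y i) (y (σ k.succ)))
        = max (x i) (min (y i) (y (σ k.succ))) := fun i => by
      rw [max_assoc, max_eq_right (min_le_min_left _ hσk)]
    calc f x ≤ f (fun i => max (x i) (min (y i) (y (σ k.castSucc)))) := ih
      _ ≤ f (fun i => max (max (x i) (min (y i) (y (σ k.castSucc))))
            (min (y i) (y (σ k.succ)))) :=
        hf.le_apply_max (fun i => max_rec' (· ∈ I) (hx i) (hmin _ (hy _) i))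
          (hmin _ (hy _)) (monovary_max_min_min hxy hgap)
      _ = _ := by simp only [hjoin]

theorem ComonMaxitiveOn.nondecreasingOn {f : (Fin n → ℝ) → ℝ} (hf : ComonMaxitiveOn I f) :
    NondecreasingOn I f := by
  intro x y hx hy hxy
  cases n with
  | zero => rw [Subsingleton.elim x y]
  | succ m =>
    have hlast : (fun i => max (x i) (min (y i) (y (Tuple.sort y (Fin.last m))))) = y :=
      funext fun i => by
        have := Tuple.monotone_sort y (Fin.le_last ((Tuple.sort y).symm i))
        simp only [Function.comp_apply, Equiv.apply_symm_apply] at this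
        rw [min_eq_left this, max_eq_right (hxy i)]
    simpa only [hlast] using hf.le_apply_max_min_sort hx hy hxy (Fin.last m)

theorem ComonMinitiveOn.neg {f : (Fin n → ℝ) → ℝ} (hf : ComonMinitiveOn I f) :
    ComonMaxitiveOn (-I) (fun u => -f (-u)) := by
  intro u v hu hv huv
  have hneg : (-fun i => max (u i) (v i)) = fun i => min ((-u) i) ((-v) i) :=
    funext fun i => by simp [min_neg_neg]
  dsimp only
  rw [hneg, hf (-u) (-v) hu hv huv.neg, max_neg_neg]

theorem NondecreasingOn.of_neg {f : (Fin n → ℝ) → ℝ}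
    (h : NondecreasingOn (-I) (fun u => -f (-u))) : NondecreasingOn I f := by
  intro x y hx hy hxy
  simpa using h (-y) (-x) (by simpa using hy) (by simpa using hx) fun i => neg_le_neg (hxy i)

end

theorem statement7_general (n : ℕ) (I : Set ℝ) (f : (Fin n → ℝ) → ℝ)
    (hf : ComonMaxitiveOn I f ∨ ComonMinitiveOn I f) :
    NondecreasingOn I f := by
  rcases hf with hf | hf
  · exact hf.nondecreasingOn
  · exact hf.neg.nondecreasingOn.of_neg

theorem statement7 (n : ℕ) (hn : 0 < n) (I : Set ℝ) (hI : I.OrdConnected)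
    (hInt : ∃ a b : ℝ, a ∈ I ∧ b ∈ I ∧ a < b) (f : (Fin n → ℝ) → ℝ)
    (hf : ComonMaxitiveOn I f ∨ ComonMinitiveOn I f) :
    NondecreasingOn I f :=
  statement7_general n I f hf
end
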